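/- Let A, B : ℝ^{2d} → ℝ^{2d} be smooth DFT vectors with lifts 𝔸 = (A^I, η_{IJ}A^J) and 𝔹 = (B^I, η_{IJ}B^J). Let the Dorfman derivative of the large standard Courant algebroid have components: vector part 𝔸^I ∂_I 𝔹^J − 𝔹^I ∂_I 𝔸^J, and form part 𝔸^I ∂_I B̃_J + B̃_I ∂_J 𝔸^I − 𝔹^I ∂_I Ã_J + 𝔹^I ∂_J Ã_I. Then for every index J, ½(vector part^J + η^{JK}·form part_K) = A^I ∂_I B^J − B^I ∂_I A^J + B_I ∂^J A^I; that is, the projection p_+ of the Dorfman derivative of lifted sections equals the generalized Lie derivative 𝖫_A B of DFT. -/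
import Mathlib


open scoped BigOperators

noncomputable section

/-- Doubled index set: `I = 1,…,2d`, realized as `Fin d ⊕ Fin d`. -/
abbrev DIdx (d : ℕ) := Fin d ⊕ Fin d

/-- The doubled space `ℝ^{2d}`. -/
abbrev DSpace (d : ℕ) := DIdx d → ℝ

/-- The constant O(d,d)-invariant metric `η = ((0,1_d),(1_d,0))`; numerically `η⁻¹ = η`. -/
def eta {d : ℕ} : DIdx d → DIdx d → ℝ
  | Sum.inl i, Sum.inr j => if i = j then 1 else 0
  | Sum.inr i, Sum.inl j => if i = j then 1 else 0
  | _, _ => 0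

/-- Partial derivative `∂_I f (x)`. -/
def pd {d : ℕ} (f : DSpace d → ℝ) (I : DIdx d) (x : DSpace d) : ℝ :=
  fderiv ℝ f x (Pi.single I 1)

/-- Lowered components `A_I := η_{IJ} A^J`. -/
def low {d : ℕ} (A : DSpace d → DSpace d) (I : DIdx d) : DSpace d → ℝ :=
  fun x => ∑ J, eta I J * A x J

/-- Raised derivative `∂^I f := η^{IJ} ∂_J f`. -/
def pdU {d : ℕ} (f : DSpace d → ℝ) (I : DIdx d) (x : DSpace d) : ℝ :=
  ∑ J, eta I J * pd f J x

lemma eta_apply {d : ℕ} (K L : DIdx d) : eta K L = if L = Sum.swap K then 1 else 0 := by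
  rcases K with k | k <;> rcases L with l | l <;> simp [eta, Sum.swap, eq_comm]

lemma sum_eta_mul {d : ℕ} (K : DIdx d) (c : DIdx d → ℝ) :
    ∑ L, eta K L * c L = c (Sum.swap K) := by
  simp [eta_apply, ite_mul]

lemma low_eq {d : ℕ} (A : DSpace d → DSpace d) (I : DIdx d) :
    low A I = fun x => A x (Sum.swap I) :=
  funext fun x => sum_eta_mul I (A x)

lemma pdU_eq {d : ℕ} (f : DSpace d → ℝ) (I : DIdx d) (x : DSpace d) :
    pdU f I x = pd f (Sum.swap I) x :=
  sum_eta_mul I (fun K => pd f K x)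

/-- The projection `p₊` of the Dorfman derivative of the lifted sections
`𝔸 = (A^I, η_{IJ}A^J)`, `𝔹 = (B^I, η_{IJ}B^J)` of the large standard Courant algebroid equals
the generalized Lie derivative `𝖫_A B` of DFT. -/
theorem statement1 {d : ℕ} (A B : DSpace d → DSpace d)
    (hA : ContDiff ℝ (⊤ : ℕ∞) A) (hB : ContDiff ℝ (⊤ : ℕ∞) B) (J : DIdx d) (x : DSpace d) :
    (1/2) * ((∑ I, (A x I * pd (fun y => B y J) I x - B x I * pd (fun y => A y J) I x))
      + ∑ K, eta J K *
        (∑ I, (A x I * pd (low B K) I x + low B I x * pd (fun y => A y I) K x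
            - B x I * pd (low A K) I x + B x I * pd (low A I) K x)))
    = ∑ I, (A x I * pd (fun y => B y J) I x - B x I * pd (fun y => A y J) I x
        + low B I x * pdU (fun y => A y I) J x) := by
  simp only [low_eq, pdU_eq, sum_eta_mul, Sum.swap_swap]
  have hre : ∑ I, B x I * pd (fun y => A y (Sum.swap I)) (Sum.swap J) x
      = ∑ I, B x (Sum.swap I) * pd (fun y => A y I) (Sum.swap J) x :=
    Fintype.sum_equiv (Equiv.sumComm (Fin d) (Fin d)) _ _
      (fun I => by simp [Sum.swap_swap])
  simp only [Finset.sum_add_distrib, Finset.sum_sub_distrib]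
  rw [hre]
  ring
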